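/- arXiv:2412.09923 — 2 statements merged into one kernel-verified Lean document; each statement's English description precedes it below -/
import Mathlib

section
/- Let q be an odd prime power and n an even positive integer. There exists a Euclidean self-dual linear code of length n over F_q (i.e., a linear code C ⊆ F_q^n with C = C^⊥ under the standard bilinear form) if and only if (−1)^{n/2} is a square in F_q. -/
open Module Finset

noncomputable section SelfDualAux

variable {F : Type} [Field F]

/-- The dot-product bilinear form on `ι → F`. -/
def dotB (F : Type) [Field F] (ι : Type) [Fintype ι] : LinearMap.BilinForm F (ι → F) :=
  LinearMap.mk₂ F (fun x y => ∑ i, x i * y i)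
    (fun x x' y => by simp [add_mul, Finset.sum_add_distrib])
    (fun c x y => by simp [Finset.mul_sum, mul_assoc])
    (fun x y y' => by simp [mul_add, Finset.sum_add_distrib])
    (fun c x y => by simp [Finset.mul_sum, smul_eq_mul]; exact Finset.sum_congr rfl fun i _ => by ring)

variable {ι : Type} [Fintype ι]

lemma dotB_apply (x y : ι → F) : dotB F ι x y = ∑ i, x i * y i := rfl

lemma dotB_comm (x y : ι → F) : dotB F ι x y = dotB F ι y x := by
  simp [dotB_apply, mul_comm]

lemma dotB_refl : (dotB F ι).IsRefl := fun x y h => by rwa [dotB_comm]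

lemma dotB_nondeg [DecidableEq ι] : (dotB F ι).Nondegenerate := by
  refine ⟨fun x hx => ?_, fun x hx => ?_⟩
  · funext i
    have := hx (Pi.single i 1)
    simpa [dotB_apply, Pi.single_apply, mul_ite] using this
  · funext i
    have := hx (Pi.single i 1)
    simpa [dotB_apply, Pi.single_apply, ite_mul] using this

lemma mem_dotB_orth_iff (C : Submodule F (ι → F)) (x : ι → F) :
    x ∈ (dotB F ι).orthogonal C ↔ ∀ c ∈ C, ∑ i, x i * c i = 0 := by
  rw [LinearMap.BilinForm.mem_orthogonal_iff]
  constructor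
  · intro h c hc
    have := h c hc
    rw [dotB_comm] at this
    exact this
  · intro h c hc
    rw [dotB_comm]
    exact h c hc

lemma selfdual_iff (C : Submodule F (ι → F)) :
    (∀ x, x ∈ C ↔ ∀ c ∈ C, ∑ i, x i * c i = 0) ↔ C = (dotB F ι).orthogonal C := by
  constructor
  · intro h
    ext x
    rw [h, mem_dotB_orth_iff]
  · intro h x
    conv_lhs => rw [h]
    rw [mem_dotB_orth_iff]

lemma finrank_dotB_orth [DecidableEq ι] (C : Submodule F (ι → F)) :
    finrank F ((dotB F ι).orthogonal C) = Fintype.card ι - finrank F C := by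
  have := LinearMap.BilinForm.finrank_orthogonal (B := dotB F ι) dotB_nondeg C
  simpa [Module.finrank_pi] using this

lemma lagrangian_selfdual [DecidableEq ι] (C : Submodule F (ι → F))
    (hle : C ≤ (dotB F ι).orthogonal C)
    (hdim : finrank F C + finrank F C = Fintype.card ι) :
    C = (dotB F ι).orthogonal C := by
  refine Submodule.eq_of_le_of_finrank_le hle ?_
  rw [finrank_dotB_orth]
  omega

lemma forward_isSquare [DecidableEq ι] {k : ℕ} (hcard : Fintype.card ι = k + k)
    (h2 : (2 : F) ≠ 0)
    (C : Submodule F (ι → F)) (hC : C = (dotB F ι).orthogonal C) :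
    IsSquare ((-1 : F) ^ k) := by
  set B := dotB F ι with hB
  -- dimension of C is k
  have hk : finrank F C = k := by
    have h1 := finrank_dotB_orth (F := F) C
    rw [← hC] at h1
    have h3 : finrank F C ≤ Fintype.card ι := by
      have := Submodule.finrank_le C
      rwa [Module.finrank_pi] at this
    omega
  -- basis of C
  let b : Basis (Fin k) F C := Module.finBasisOfFinrankEq F C hk
  set E : Fin k → ι → F := fun i => (b i : ι → F) with hE
  have hEC : ∀ i, E i ∈ C := fun i => (b i).2
  have hiso : ∀ x ∈ C, ∀ y ∈ C, B x y = 0 := by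
    intro x hx y hy
    rw [hC] at hy
    rw [dotB_comm]
    exact (mem_dotB_orth_iff C y).mp hy x hx
  -- dual vectors g j with B (E i) (g j) = δ_ij
  have hsurj : ∀ j : Fin k, ∃ g : ι → F, ∀ i, B (E i) g = if i = j then 1 else 0 := by
    intro j
    obtain ⟨φ, hφ⟩ := LinearMap.exists_extend (b.coord j)
    refine ⟨(B.toDual dotB_nondeg).symm φ, fun i => ?_⟩
    rw [dotB_comm]
    have h1 : B ((B.toDual dotB_nondeg).symm φ) (E i) = φ (E i) :=
      LinearMap.BilinForm.apply_toDual_symm_apply (hB := dotB_nondeg) φ (E i)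
    rw [h1]
    have h2' : φ (E i) = b.coord j (b i) := by
      conv_rhs => rw [← hφ]
      rfl
    rw [h2', Basis.coord_apply, Basis.repr_self, Finsupp.single_apply]
  choose g hg using hsurj
  have hEE : ∀ i l, B (E i) (E l) = 0 := fun i l => hiso _ (hEC i) _ (hEC l)
  have hgE : ∀ i j, B (g j) (E i) = if i = j then 1 else 0 := fun i j => by
    rw [dotB_comm]; exact hg j i
  -- corrected dual family
  set f : Fin k → ι → F := fun j => g j - (2⁻¹ : F) • ∑ i, B (g j) (g i) • E i with hf
  have hEf : ∀ i j, B (E i) (f j) = if i = j then 1 else 0 := by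
    intro i j
    rw [hf]
    simp only [map_sub, map_smul, map_sum, smul_eq_mul, hEE, mul_zero,
      Finset.sum_const_zero, sub_zero, hg]
  have hfE : ∀ i j, B (f j) (E i) = if i = j then 1 else 0 := fun i j => by
    rw [dotB_comm]; exact hEf i j
  have hff : ∀ j l, B (f j) (f l) = 0 := by
    intro j l
    rw [hf]
    simp only [map_sub, map_smul, map_sum, LinearMap.sub_apply, LinearMap.smul_apply,
      LinearMap.sum_apply, smul_eq_mul]
    simp only [hEE, mul_zero, Finset.sum_const_zero, sub_zero, hg, hgE, mul_ite, mul_one,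
      Finset.sum_ite_eq, Finset.sum_ite_eq', Finset.mem_univ, if_true]
    have hGsym : B (g j) (g l) = B (g l) (g j) := dotB_comm _ _
    field_simp
    linear_combination hGsym
  -- assemble hyperbolic basis rows and take the Gram determinant
  set r : Fin 2 × Fin k → ι → F := fun a => if a.1 = 0 then E a.2 else f a.2 with hr
  have hcard2 : Fintype.card (Fin 2 × Fin k) = Fintype.card ι := by
    simp [hcard, two_mul]
  let e : Fin 2 × Fin k ≃ ι := Fintype.equivOfCardEq hcard2
  set P : Matrix (Fin 2 × Fin k) (Fin 2 × Fin k) F :=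
    Matrix.of fun a c => r a (e c) with hP
  have hGram : P * P.transpose =
      Matrix.blockDiagonal (fun _ : Fin k => !![0, 1; 1, 0]) := by
    ext a c
    rw [Matrix.mul_apply]
    have hsum : ∑ x, P a x * P.transpose x c = B (r a) (r c) := by
      rw [dotB_apply]
      exact Equiv.sum_comp e fun i => r a i * r c i
    rw [hsum]
    obtain ⟨a1, i⟩ := a
    obtain ⟨c1, j⟩ := c
    rw [Matrix.blockDiagonal_apply]
    fin_cases a1 <;> fin_cases c1 <;> simp only [hr] <;>
      norm_num [hEE, hEf, hfE, hff, eq_comm]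
  have hdet := congrArg Matrix.det hGram
  rw [Matrix.det_mul, Matrix.det_transpose, Matrix.det_blockDiagonal] at hdet
  have hd2 : (!![0, 1; 1, 0] : Matrix (Fin 2) (Fin 2) F).det = -1 := by
    simp [Matrix.det_fin_two_of]
  rw [hd2] at hdet
  refine ⟨P.det, ?_⟩
  rw [hdet]
  simp

lemma backward_block {d rr m : ℕ} (w : Fin rr → Fin d → F)
    (horth : ∀ j l, ∑ s, w j s * w l s = 0)
    (pick : Fin rr → Fin d) (hpick : ∀ j l, w j (pick l) = if l = j then 1 else 0)
    (hd : d = rr + rr) :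
    ∃ C : Submodule F (Fin m × Fin d → F),
      ∀ x, x ∈ C ↔ ∀ c ∈ C, ∑ i, x i * c i = 0 := by
  classical
  set v : Fin m × Fin rr → (Fin m × Fin d → F) :=
    fun a => fun i => if i.1 = a.1 then w a.2 i.2 else 0 with hv
  set C := Submodule.span F (Set.range v) with hCdef
  have hvv : ∀ a c, ∑ i, v a i * v c i = 0 := by
    intro a c
    rw [Fintype.sum_prod_type]
    simp only [hv]
    by_cases h : a.1 = c.1
    · rw [← h]
      rw [Finset.sum_eq_single a.1]
      · simp [horth]
      · intro t _ ht
        simp [ht]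
      · simp
    · apply Finset.sum_eq_zero
      intro t _
      apply Finset.sum_eq_zero
      intro s _
      by_cases h1 : t = a.1 <;> by_cases h2 : t = c.1 <;> simp_all
  have hli : LinearIndependent F v := by
    rw [Fintype.linearIndependent_iff]
    intro cc hcc a
    have := congr_fun hcc (a.1, pick a.2)
    simp only [Finset.sum_apply, Pi.smul_apply, smul_eq_mul, hv, Pi.zero_apply] at this
    rw [Finset.sum_eq_single a] at this
    · simpa [hpick] using this
    · intro x _ hx
      by_cases h1 : a.1 = x.1
      · have h2 : a.2 ≠ x.2 := fun h => hx (Prod.ext h1.symm h.symm)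
        simp [h1, hpick, h2]
      · simp [h1]
    · simp
  have hfr : finrank F C = m * rr := by
    rw [hCdef, finrank_span_eq_card hli]
    simp
  have hle : C ≤ (dotB F (Fin m × Fin d)).orthogonal C := by
    rw [hCdef, Submodule.span_le]
    rintro _ ⟨a, rfl⟩
    rw [SetLike.mem_coe, mem_dotB_orth_iff]
    intro c hc
    have hker : Submodule.span F (Set.range v) ≤
        LinearMap.ker ((dotB F (Fin m × Fin d)) (v a)) := by
      rw [Submodule.span_le]
      rintro _ ⟨c', rfl⟩
      rw [SetLike.mem_coe, LinearMap.mem_ker, dotB_apply]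
      exact hvv a c'
    exact hker hc
  refine ⟨C, (selfdual_iff C).mpr ?_⟩
  refine lagrangian_selfdual C hle ?_
  rw [hfr]
  simp only [Fintype.card_prod, Fintype.card_fin]
  rw [hd]
  ring

lemma transport_selfdual {κ : Type} [Fintype κ] (e : ι ≃ κ)
    (h : ∃ C : Submodule F (κ → F), ∀ x, x ∈ C ↔ ∀ c ∈ C, ∑ i, x i * c i = 0) :
    ∃ C : Submodule F (ι → F), ∀ x, x ∈ C ↔ ∀ c ∈ C, ∑ i, x i * c i = 0 := by
  obtain ⟨C, hC⟩ := h
  refine ⟨C.comap (LinearMap.funLeft F F e.symm), fun x => ?_⟩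
  rw [Submodule.mem_comap, hC]
  constructor
  · intro h c hc
    have hmem : (fun j => c (e.symm j)) ∈ C := by
      rw [Submodule.mem_comap] at hc
      exact hc
    have := h _ hmem
    calc ∑ i, x i * c i = ∑ j, x (e.symm j) * c (e.symm j) :=
          (Equiv.sum_comp e.symm fun i => x i * c i).symm
      _ = 0 := this
  · intro h c hc
    have hmem : (fun j => c (e j)) ∈ Submodule.comap (LinearMap.funLeft F F e.symm) C := by
      rw [Submodule.mem_comap]
      have : (LinearMap.funLeft F F e.symm fun j => c (e j)) = c := by
        funext j
        simp [LinearMap.funLeft]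
      rwa [this]
    have := h _ hmem
    calc ∑ j, (LinearMap.funLeft F F e.symm x) j * c j
          = ∑ j, x (e.symm j) * c j := rfl
      _ = ∑ i, x (e.symm (e i)) * c (e i) := (Equiv.sum_comp e fun j => x (e.symm j) * c j).symm
      _ = 0 := by simpa using this

end SelfDualAux

theorem stmt_2 (p m q n : ℕ) (hp : p.Prime) (hm : 0 < m) (hq : q = p ^ m)
    (hodd : Odd q) (hn : 0 < n) (hev : Even n)
    (F : Type) [Field F] [Fintype F] (hF : Fintype.card F = q) :
    (∃ C : Submodule F (Fin n → F),
        ∀ x : Fin n → F, x ∈ C ↔ ∀ c ∈ C, ∑ i, x i * c i = 0) ↔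
      IsSquare ((-1 : F) ^ (n / 2)) := by
  classical
  set k := n / 2 with hkdef
  have hnk : n = k + k := by
    obtain ⟨t, ht⟩ := hev
    omega
  have hcardodd : Fintype.card F % 2 = 1 := by
    rw [hF]
    exact Nat.odd_iff.mp hodd
  have h2 : (2 : F) ≠ 0 := by
    intro h20
    have hdvd : ringChar F ∣ 2 := ringChar.dvd h20
    have hne1 : ringChar F ≠ 1 := CharP.ringChar_ne_one
    rcases (Nat.dvd_prime Nat.prime_two).mp hdvd with h | h
    · exact hne1 h
    · have := FiniteField.even_card_of_char_two h
      omega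
  constructor
  · rintro ⟨C, hC⟩
    have hC' := (selfdual_iff C).mp hC
    exact forward_isSquare (by simp [hnk]) h2 C hC'
  · intro hsq
    by_cases hsq1 : IsSquare (-1 : F)
    · obtain ⟨i, hi⟩ := hsq1
      have h2k : n = k * 2 := by omega
      refine transport_selfdual ((finCongr h2k).trans finProdFinEquiv.symm) ?_
      refine backward_block (m := k) (fun _ : Fin 1 => ![1, i]) ?_ (fun _ => 0) ?_ rfl
      · intro j l
        simp [Fin.sum_univ_two]
        linear_combination -hi
      · intro j l
        simp [Subsingleton.elim l j]
    · have hkev : Even k := by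
        rcases Nat.even_or_odd k with h | h
        · exact h
        · exfalso
          rw [h.neg_one_pow] at hsq
          exact hsq1 hsq
      obtain ⟨t, ht⟩ := hkev
      have h4t : n = t * 4 := by omega
      obtain ⟨a, b, hab⟩ := FiniteField.exists_root_sum_quadratic
        (f := (Polynomial.X ^ 2 : Polynomial F)) (g := Polynomial.X ^ 2 + Polynomial.C 1)
        (Polynomial.degree_X_pow 2) (Polynomial.degree_X_pow_add_C (by norm_num) 1) hcardodd
      simp only [Polynomial.eval_add, Polynomial.eval_pow, Polynomial.eval_X,
        Polynomial.eval_C] at hab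
      refine transport_selfdual ((finCongr h4t).trans finProdFinEquiv.symm) ?_
      refine backward_block (m := t) ![![1, 0, a, b], ![0, 1, -b, a]] ?_ ![0, 1] ?_ rfl
      · intro j l
        fin_cases j <;> fin_cases l <;>
          simp [Fin.sum_univ_four] <;>
          first
            | ring1
            | linear_combination hab
      · intro j l
        fin_cases j <;> fin_cases l <;> simp
end

section
/- Let p be a prime, e ≥ 2 an integer, and N₁, N₂ positive integers. Let C be a Z_{p^e}-submodule of Z_{p^e}^{N₁} ⊕ Z_{p^{e−1}}^{N₂} (a Z_{p^e}Z_{p^{e−1}}-linear code). Define the Euclidean bilinear form ⟨m₁,m₂⟩_E = Σ_{i=1}^{N₁} c_i c'_i + p·Σ_{j=1}^{N₂} lift(d_j)·lift(d'_j) with values in Z_{p^e}, and let C^{⊥_E} be the set of all m with ⟨m, c⟩_E = 0 for all c ∈ C. Then |C| · |C^{⊥_E}| = p^{e·N₁ + (e−1)·N₂}. -/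
lemma aux_mu_add (p e : ℕ) (hp : p.Prime) (he : 1 ≤ e) (x y : ZMod (p ^ (e - 1))) :
    (p : ZMod (p ^ e)) * (((x + y).val : ℕ) : ZMod (p ^ e)) =
      (p : ZMod (p ^ e)) * ((x.val : ℕ) : ZMod (p ^ e)) +
      (p : ZMod (p ^ e)) * ((y.val : ℕ) : ZMod (p ^ e)) := by
  haveI : NeZero (p ^ (e - 1)) := ⟨pow_ne_zero _ hp.pos.ne'⟩
  have hpR : (p : ZMod (p ^ e)) * (p : ZMod (p ^ e)) ^ (e - 1) = 0 := by
    have : ((p * p ^ (e - 1) : ℕ) : ZMod (p ^ e)) = 0 := by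
      rw [← pow_succ', Nat.sub_add_cancel he]
      exact ZMod.natCast_self _
    push_cast at this
    exact this
  rw [ZMod.val_add]
  have hmod := congrArg (Nat.cast : ℕ → ZMod (p ^ e))
    (Nat.mod_add_div (x.val + y.val) (p ^ (e - 1)))
  push_cast at hmod ⊢
  linear_combination (p : ZMod (p ^ e)) * hmod -
    (((x.val + y.val) / p ^ (e - 1) : ℕ) : ZMod (p ^ e)) * hpR


lemma aux_card_hom (A : Type) [AddCommGroup A] [Finite A] (n : ℕ) [NeZero n]
    (h : ∀ a : A, n • a = 0) : Nat.card (A →+ ZMod n) = Nat.card A := by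
  set G := Multiplicative A
  have hdvd : Monoid.exponent G ∣ n := by
    refine Monoid.exponent_dvd_of_forall_pow_eq_one fun g => ?_
    have h2 := congrArg Multiplicative.ofAdd (h g.toAdd)
    rw [ofAdd_nsmul] at h2
    simpa using h2
  have hexp : Monoid.exponent G ≠ 0 := by
    have : Monoid.ExponentExists G := Monoid.ExponentExists.of_finite
    exact (Monoid.exponent_pos.mpr this).ne'
  haveI : IsCyclic (Multiplicative (ZMod n)) := inferInstance
  haveI : IsCyclic (Multiplicative (ZMod n))ˣ :=
    isCyclic_of_surjective toUnits.toMonoidHom toUnits.surjective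
  haveI : HasEnoughRootsOfUnity (Multiplicative (ZMod n)) (Monoid.exponent G) := by
    constructor
    · set d := Monoid.exponent G
      refine ⟨Multiplicative.ofAdd ((n / d : ℕ) : ZMod n), ?_⟩
      have hord : orderOf (Multiplicative.ofAdd ((n / d : ℕ) : ZMod n)) = d := by
        rw [orderOf_ofAdd_eq_addOrderOf, ZMod.addOrderOf_coe _ (NeZero.ne n)]
        rw [Nat.gcd_eq_right (Nat.div_dvd_of_dvd hdvd)]
        exact Nat.div_div_self hdvd (NeZero.ne n)
      have := IsPrimitiveRoot.orderOf (Multiplicative.ofAdd ((n / d : ℕ) : ZMod n))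
      rwa [hord] at this
    · infer_instance
  obtain ⟨E⟩ := CommGroup.monoidHom_mulEquiv_of_hasEnoughRootsOfUnity G (Multiplicative (ZMod n))
  calc Nat.card (A →+ ZMod n)
      = Nat.card (G →* Multiplicative (ZMod n)) :=
        Nat.card_congr AddMonoidHom.toMultiplicative
    _ = Nat.card (G →* (Multiplicative (ZMod n))ˣ) :=
        Nat.card_congr (MulEquiv.monoidHomCongrRightEquiv (M := G) toUnits)
    _ = Nat.card G := Nat.card_congr E.toEquiv
    _ = Nat.card A := rfl



lemma aux_main {M : Type} [AddCommGroup M] [Finite M] (n : ℕ) [NeZero n]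
    (htor : ∀ m : M, n • m = 0)
    (Φ : M →+ (M →+ ZMod n)) (hinj : Function.Injective Φ)
    (C : AddSubgroup M) :
    Nat.card C * Nat.card {m : M | ∀ c ∈ C, Φ m c = 0} = Nat.card M := by
  classical
  haveI : Finite (M →+ ZMod n) := DFunLike.finite _
  haveI : Finite (↥C →+ ZMod n) := DFunLike.finite _
  have htorC : ∀ c : ↥C, n • c = 0 := by
    intro c; apply Subtype.ext; simpa using htor (c : M)
  have htorQ : ∀ q : M ⧸ C, n • q = 0 := by
    intro q
    induction q using QuotientAddGroup.induction_on with
    | H x =>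
      have : ((n • x : M) : M ⧸ C) = n • ((x : M) : M ⧸ C) := by
        simpa using map_nsmul (QuotientAddGroup.mk' C) x n
      rw [← this, htor x]; rfl
  let res : (M →+ ZMod n) →+ (↥C →+ ZMod n) :=
    AddMonoidHom.mk' (fun F => F.comp C.subtype) (fun F G => by ext c; rfl)
  have hker_le : ∀ F : (M →+ ZMod n), F ∈ res.ker → C ≤ F.ker := by
    intro F hF c hc
    have := DFunLike.congr_fun (AddMonoidHom.mem_ker.mp hF) (⟨c, hc⟩ : ↥C)
    simpa [res] using this
  let eker : ↥res.ker ≃ ((M ⧸ C) →+ ZMod n) :=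
    { toFun := fun F => QuotientAddGroup.lift C F.1 (hker_le F.1 F.2)
      invFun := fun φ => ⟨φ.comp (QuotientAddGroup.mk' C), by
        rw [AddMonoidHom.mem_ker]; ext c
        have h0 : (((c : M)) : M ⧸ C) = 0 := (QuotientAddGroup.eq_zero_iff _).mpr c.2
        simp [res, h0]⟩
      left_inv := fun F => by apply Subtype.ext; ext x; rfl
      right_inv := fun φ => by ext x; rfl }
  have hcard_ker : Nat.card ↥res.ker = Nat.card (M ⧸ C) := by
    rw [Nat.card_congr eker]; exact aux_card_hom _ n htorQ
  have hcard_split : Nat.card (M →+ ZMod n) = Nat.card ↥res.range * Nat.card ↥res.ker := by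
    rw [AddSubgroup.card_eq_card_quotient_mul_card_addSubgroup res.ker]
    congr 1
    exact Nat.card_congr (QuotientAddGroup.quotientKerEquivRange res).toEquiv
  have hcardM : Nat.card (M →+ ZMod n) = Nat.card M := aux_card_hom M n htor
  have hcardC : Nat.card (↥C →+ ZMod n) = Nat.card ↥C := aux_card_hom ↥C n htorC
  have hlagrM : Nat.card M = Nat.card (M ⧸ C) * Nat.card ↥C :=
    AddSubgroup.card_eq_card_quotient_mul_card_addSubgroup C
  have hQpos : 0 < Nat.card (M ⧸ C) := Nat.card_pos
  have hrange_card : Nat.card ↥res.range = Nat.card (↥C →+ ZMod n) := by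
    have h1 : Nat.card ↥res.range * Nat.card (M ⧸ C) = Nat.card (M ⧸ C) * Nat.card ↥C := by
      rw [← hcard_ker, ← hcard_split, hcardM, hlagrM, hcard_ker]
    have h2 : Nat.card (M ⧸ C) * Nat.card ↥res.range = Nat.card (M ⧸ C) * Nat.card ↥C := by
      rw [mul_comm]; exact h1
    rw [hcardC]
    exact Nat.eq_of_mul_eq_mul_left hQpos h2
  have hres_surj : Function.Surjective res := by
    rw [← AddMonoidHom.range_eq_top]
    exact AddSubgroup.eq_top_of_card_eq _ hrange_card
  have hΦ_surj : Function.Surjective Φ := by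
    exact ((Nat.bijective_iff_injective_and_card Φ).mpr ⟨hinj, hcardM.symm⟩).2
  let Ψ := res.comp Φ
  have hΨ_surj : Function.Surjective Ψ := fun f => by
    obtain ⟨F, hF⟩ := hres_surj f
    obtain ⟨m, hm⟩ := hΦ_surj F
    exact ⟨m, by simp [Ψ, hm, hF]⟩
  have hset : {m : M | ∀ c ∈ C, Φ m c = 0} = (Ψ.ker : Set M) := by
    ext m
    simp only [Set.mem_setOf_eq, SetLike.mem_coe, AddMonoidHom.mem_ker]
    constructor
    · intro h
      ext c
      simpa [Ψ, res] using h c c.2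
    · intro h c hc
      have := DFunLike.congr_fun h (⟨c, hc⟩ : ↥C)
      simpa [Ψ, res] using this
  have hcardQΨ : Nat.card (M ⧸ Ψ.ker) = Nat.card ↥C := by
    rw [Nat.card_congr (QuotientAddGroup.quotientKerEquivRange Ψ).toEquiv]
    have hr : Ψ.range = ⊤ := AddMonoidHom.range_eq_top.mpr hΨ_surj
    rw [hr, ← hcardC]
    exact Nat.card_congr AddSubgroup.topEquiv.toEquiv
  calc Nat.card ↥C * Nat.card {m : M | ∀ c ∈ C, Φ m c = 0}
      = Nat.card ↥C * Nat.card ↥Ψ.ker := by rw [hset]; rfl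
    _ = Nat.card (M ⧸ Ψ.ker) * Nat.card ↥Ψ.ker := by rw [hcardQΨ]
    _ = Nat.card M := (AddSubgroup.card_eq_card_quotient_mul_card_addSubgroup Ψ.ker).symm

theorem stmt_4 (p e N₁ N₂ : ℕ) (hp : p.Prime) (he : 2 ≤ e)
    (h1 : 0 < N₁) (h2 : 0 < N₂)
    (C : AddSubgroup ((Fin N₁ → ZMod (p ^ e)) × (Fin N₂ → ZMod (p ^ (e - 1)))))
    (hsmul : ∀ (a : ZMod (p ^ e))
      (x : (Fin N₁ → ZMod (p ^ e)) × (Fin N₂ → ZMod (p ^ (e - 1)))), x ∈ C →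
      ((fun i => a * x.1 i, fun j => (a.val : ZMod (p ^ (e - 1))) * x.2 j) :
        (Fin N₁ → ZMod (p ^ e)) × (Fin N₂ → ZMod (p ^ (e - 1)))) ∈ C) :
    Nat.card C *
      Nat.card {m : (Fin N₁ → ZMod (p ^ e)) × (Fin N₂ → ZMod (p ^ (e - 1))) |
        ∀ c ∈ C, (∑ i, m.1 i * c.1 i) +
          (p : ZMod (p ^ e)) *
            ∑ j, ((m.2 j).val : ZMod (p ^ e)) * ((c.2 j).val : ZMod (p ^ e)) = 0} =
    p ^ (e * N₁ + (e - 1) * N₂) := by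
  classical
  haveI hQ : NeZero (p ^ e) := ⟨pow_ne_zero _ hp.pos.ne'⟩
  haveI hR : NeZero (p ^ (e - 1)) := ⟨pow_ne_zero _ hp.pos.ne'⟩
  have he1 : 1 ≤ e := le_trans one_le_two he
  have key : ∀ (a : ZMod (p ^ e)) (y y' : ZMod (p ^ (e - 1))),
      (p : ZMod (p ^ e)) * (a * (((y + y').val : ℕ) : ZMod (p ^ e))) =
        (p : ZMod (p ^ e)) * (a * ((y.val : ℕ) : ZMod (p ^ e))) +
        (p : ZMod (p ^ e)) * (a * ((y'.val : ℕ) : ZMod (p ^ e))) := fun a y y' => by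
    linear_combination a * aux_mu_add p e hp he1 y y'
  -- the pairing
  have hBadd_right : ∀ m c c' : (Fin N₁ → ZMod (p ^ e)) × (Fin N₂ → ZMod (p ^ (e - 1))),
      ((∑ i, m.1 i * (c + c').1 i) + (p : ZMod (p ^ e)) *
        ∑ j, ((m.2 j).val : ZMod (p ^ e)) * (((c + c').2 j).val : ZMod (p ^ e)))
      = ((∑ i, m.1 i * c.1 i) + (p : ZMod (p ^ e)) *
        ∑ j, ((m.2 j).val : ZMod (p ^ e)) * ((c.2 j).val : ZMod (p ^ e)))
      + ((∑ i, m.1 i * c'.1 i) + (p : ZMod (p ^ e)) *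
        ∑ j, ((m.2 j).val : ZMod (p ^ e)) * ((c'.2 j).val : ZMod (p ^ e))) := by
    intro m c c'
    simp only [Prod.fst_add, Prod.snd_add, Pi.add_apply, mul_add, Finset.mul_sum]
    rw [Finset.sum_add_distrib]
    have h2 : ∀ j ∈ Finset.univ, (p : ZMod (p ^ e)) *
        (((m.2 j).val : ZMod (p ^ e)) * (((c.2 j + c'.2 j).val : ℕ) : ZMod (p ^ e)))
        = (p : ZMod (p ^ e)) * (((m.2 j).val : ZMod (p ^ e)) * ((c.2 j).val : ZMod (p ^ e)))
        + (p : ZMod (p ^ e)) * (((m.2 j).val : ZMod (p ^ e)) * ((c'.2 j).val : ZMod (p ^ e))) :=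
      fun j _ => key _ _ _
    rw [Finset.sum_congr rfl h2, Finset.sum_add_distrib]
    ring
  have hBadd_left : ∀ m m' c : (Fin N₁ → ZMod (p ^ e)) × (Fin N₂ → ZMod (p ^ (e - 1))),
      ((∑ i, (m + m').1 i * c.1 i) + (p : ZMod (p ^ e)) *
        ∑ j, (((m + m').2 j).val : ZMod (p ^ e)) * ((c.2 j).val : ZMod (p ^ e)))
      = ((∑ i, m.1 i * c.1 i) + (p : ZMod (p ^ e)) *
        ∑ j, ((m.2 j).val : ZMod (p ^ e)) * ((c.2 j).val : ZMod (p ^ e)))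
      + ((∑ i, m'.1 i * c.1 i) + (p : ZMod (p ^ e)) *
        ∑ j, ((m'.2 j).val : ZMod (p ^ e)) * ((c.2 j).val : ZMod (p ^ e))) := by
    intro m m' c
    simp only [Prod.fst_add, Prod.snd_add, Pi.add_apply, add_mul, Finset.mul_sum]
    rw [Finset.sum_add_distrib]
    have h2 : ∀ j ∈ Finset.univ, (p : ZMod (p ^ e)) *
        ((((m.2 j + m'.2 j).val : ℕ) : ZMod (p ^ e)) * ((c.2 j).val : ZMod (p ^ e)))
        = (p : ZMod (p ^ e)) * (((m.2 j).val : ZMod (p ^ e)) * ((c.2 j).val : ZMod (p ^ e)))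
        + (p : ZMod (p ^ e)) * (((m'.2 j).val : ZMod (p ^ e)) * ((c.2 j).val : ZMod (p ^ e))) := by
      intro j _
      have := key (((c.2 j).val : ZMod (p ^ e))) (m.2 j) (m'.2 j)
      linear_combination this
    rw [Finset.sum_congr rfl h2, Finset.sum_add_distrib]
    ring
  let Φ : ((Fin N₁ → ZMod (p ^ e)) × (Fin N₂ → ZMod (p ^ (e - 1)))) →+
      (((Fin N₁ → ZMod (p ^ e)) × (Fin N₂ → ZMod (p ^ (e - 1)))) →+ ZMod (p ^ e)) :=
    AddMonoidHom.mk' (fun m => AddMonoidHom.mk'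
      (fun c => (∑ i, m.1 i * c.1 i) + (p : ZMod (p ^ e)) *
        ∑ j, ((m.2 j).val : ZMod (p ^ e)) * ((c.2 j).val : ZMod (p ^ e)))
      (hBadd_right m))
      (fun m m' => by ext c; exact hBadd_left m m' c)
  haveI : Fact (1 < p ^ (e - 1)) := ⟨Nat.one_lt_pow (by omega) hp.one_lt⟩
  have hinj : Function.Injective Φ := by
    rw [injective_iff_map_eq_zero]
    intro m hm
    have hv : ∀ c : (Fin N₁ → ZMod (p ^ e)) × (Fin N₂ → ZMod (p ^ (e - 1))), (∑ i, m.1 i * c.1 i) + (p : ZMod (p ^ e)) *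
        ∑ j, ((m.2 j).val : ZMod (p ^ e)) * ((c.2 j).val : ZMod (p ^ e)) = 0 := fun c => by
      have := DFunLike.congr_fun hm c
      simpa [Φ] using this
    have hfst : m.1 = 0 := by
      funext i
      have := hv (Pi.single i 1, 0)
      simpa [Pi.single_apply, Finset.sum_ite_eq'] using this
    have hsnd : m.2 = 0 := by
      funext j
      have h0 := hv (0, Pi.single j 1)
      simp only [Pi.zero_apply, mul_zero, Finset.sum_const_zero, zero_add] at h0
      have h1 : (p : ZMod (p ^ e)) * ((m.2 j).val : ZMod (p ^ e)) = 0 := by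
        simpa [Pi.single_apply, apply_ite ZMod.val, ZMod.val_one, ZMod.val_zero,
          Finset.sum_ite_eq'] using h0
      have h2 : ((p * (m.2 j).val : ℕ) : ZMod (p ^ e)) = 0 := by push_cast; exact h1
      rw [ZMod.natCast_eq_zero_iff] at h2
      have hpe : p * p ^ (e - 1) = p ^ e := by
        rw [← pow_succ', Nat.sub_add_cancel he1]
      have hdvd : p ^ (e - 1) ∣ (m.2 j).val := by
        refine (Nat.mul_dvd_mul_iff_left hp.pos).mp ?_
        rw [hpe]; exact h2
      have hval : (m.2 j).val = 0 := Nat.eq_zero_of_dvd_of_lt hdvd (ZMod.val_lt _)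
      have hz : m.2 j = 0 := (ZMod.val_eq_zero _).mp hval
      simpa using hz
    exact Prod.ext hfst hsnd
  have htor : ∀ m : (Fin N₁ → ZMod (p ^ e)) × (Fin N₂ → ZMod (p ^ (e - 1))),
      (p ^ e) • m = 0 := by
    intro m
    have hx : ∀ x : ZMod (p ^ e), (p ^ e) • x = 0 := fun x => by
      rw [nsmul_eq_mul, ZMod.natCast_self, zero_mul]
    have hy : ∀ y : ZMod (p ^ (e - 1)), (p ^ e) • y = 0 := fun y => by
      rw [nsmul_eq_mul, (ZMod.natCast_eq_zero_iff _ _).mpr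
        (pow_dvd_pow p (Nat.sub_le e 1)), zero_mul]
    have hx1 : ((p : ZMod (p ^ e))) ^ e = 0 := by
      rw [← Nat.cast_pow, ZMod.natCast_self]
    have hy1 : ((p : ZMod (p ^ (e - 1)))) ^ e = 0 := by
      rw [← Nat.cast_pow, (ZMod.natCast_eq_zero_iff _ _).mpr
        (pow_dvd_pow p (Nat.sub_le e 1))]
    refine Prod.ext ?_ ?_ <;> funext k <;> simp [hx1, hy1]
  have hcardM : Nat.card ((Fin N₁ → ZMod (p ^ e)) × (Fin N₂ → ZMod (p ^ (e - 1))))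
      = p ^ (e * N₁ + (e - 1) * N₂) := by
    simp only [Nat.card_eq_fintype_card, Fintype.card_prod, Fintype.card_fun, ZMod.card,
      Fintype.card_fin]
    rw [pow_add, pow_mul, pow_mul]
  have h := aux_main (p ^ e) htor Φ hinj C
  rw [hcardM] at h
  exact h
end
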